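/- arXiv:2504.12182 — 5 statements merged into one kernel-verified Lean document; each statement's English description precedes it below -/
import Mathlib

section
/- Let S and S' be continuous information systems and H an approximable mapping from S to S'. Let Ĥ = S(F(H)) be the approximable mapping from S(F(S)) to S(F(S')) obtained by applying F and then S to H (so that 𝔛 Ĥ Y iff there is E ∈ 𝔛 with E H Y). Then H ∘ S_{S'} = S_S ∘ Ĥ, where S_S, S_{S'} are the approximable mappings given by X S_S Y ⇔ X ⊢ Y and X S_{S'} Y ⇔ X ⊢' Y. -/
open scoped Classical

/-! ### Continuous information frames -/

structure InfFrame (A : Type*) where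
  Con : A → Set (Finset A)
  ent : A → Finset A → A → Prop

namespace InfFrame

variable {A B C : Type*}

/-- `X ⊨_i Y` : every element of `Y` is entailed by `X` at `i`. -/
def entS (𝔄 : InfFrame A) (i : A) (X Y : Finset A) : Prop :=
  ∀ b ∈ Y, 𝔄.ent i X b

/-- The axioms of a continuous information frame. -/
structure IsCIF (𝔄 : InfFrame A) : Prop where
  self_con : ∀ i : A, ({i} : Finset A) ∈ 𝔄.Con i
  con_sub : ∀ (i : A) (X Y : Finset A), Y ⊆ X → X ∈ 𝔄.Con i → Y ∈ 𝔄.Con i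
  sound : ∀ (i : A) (X Y : Finset A), X ∈ 𝔄.Con i → 𝔄.entS i X Y → Y ∈ 𝔄.Con i
  weaken : ∀ (i : A) (X Y : Finset A) (a : A),
    X ∈ 𝔄.Con i → Y ∈ 𝔄.Con i → X ⊆ Y → 𝔄.ent i X a → 𝔄.ent i Y a
  cut : ∀ (i : A) (X Y : Finset A) (a : A),
    X ∈ 𝔄.Con i → 𝔄.entS i X Y → 𝔄.ent i Y a → 𝔄.ent i X a
  con_transfer : ∀ i j : A, ({i} : Finset A) ∈ 𝔄.Con j → 𝔄.Con i ⊆ 𝔄.Con j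
  ent_transfer : ∀ (i j : A) (X : Finset A) (a : A),
    ({i} : Finset A) ∈ 𝔄.Con j → X ∈ 𝔄.Con i → 𝔄.ent i X a → 𝔄.ent j X a
  interp : ∀ (i : A) (X Y : Finset A), X ∈ 𝔄.Con i → 𝔄.entS i X Y →
    ∃ e : A, ∃ Z ∈ 𝔄.Con e, 𝔄.entS i X ({e} ∪ Z) ∧ 𝔄.entS e Z Y

/-- Condition (S): a continuous information frame is strong. -/
def Strong (𝔄 : InfFrame A) : Prop :=
  ∀ i : A, ∀ X ∈ 𝔄.Con i, X ≠ {i} → 𝔄.entS i {i} X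

/-- Condition (T): `t` is a truth element. -/
def IsTruth (𝔄 : InfFrame A) (t : A) : Prop :=
  ∀ i : A, 𝔄.ent i ∅ t

/-- Approximable families between continuous information frames. -/
structure IsApproxFam (𝔄 : InfFrame A) (𝔅 : InfFrame B)
    (H : A → Finset A → B → Prop) : Prop where
  af1 : ∀ (i : A) (X : Finset A) (k : B) (Y : Finset B) (b : B),
    X ∈ 𝔄.Con i → Y ∈ 𝔅.Con k → (∀ c ∈ ({k} : Finset B) ∪ Y, H i X c) →
    𝔅.ent k Y b → H i X b
  af2 : ∀ (i : A) (X X' : Finset A) (b : B),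
    X ∈ 𝔄.Con i → X' ∈ 𝔄.Con i → X ⊆ X' → H i X b → H i X' b
  af3 : ∀ (i : A) (X X' : Finset A) (b : B),
    X ∈ 𝔄.Con i → X' ∈ 𝔄.Con i → 𝔄.entS i X X' → H i X' b → H i X b
  af4 : ∀ (i j : A) (X : Finset A) (b : B),
    ({i} : Finset A) ∈ 𝔄.Con j → X ∈ 𝔄.Con i → H i X b → H j X b
  af5 : ∀ (i : A) (X : Finset A) (F : Finset B),
    X ∈ 𝔄.Con i → (∀ c ∈ F, H i X c) →
    ∃ c : A, ∃ U ∈ 𝔄.Con c, ∃ e : B, ∃ V ∈ 𝔅.Con e,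
      𝔄.entS i X ({c} ∪ U) ∧ (∀ d ∈ ({e} : Finset B) ∪ V, H c U d) ∧
      ∀ d ∈ F, 𝔅.ent e V d

/-- `H` respects the truth elements `t` and `t'`. -/
def RespectsTruth (H : A → Finset A → B → Prop) (t : A) (t' : B) : Prop :=
  H t ∅ t'

/-- Composition of approximable families (`𝔅` is the middle frame). -/
def compFam (𝔅 : InfFrame B)
    (G : A → Finset A → B → Prop) (H : B → Finset B → C → Prop) :
    A → Finset A → C → Prop :=
  fun i X a => ∃ e : B, ∃ V ∈ 𝔅.Con e,
    (∀ c ∈ ({e} : Finset B) ∪ V, G i X c) ∧ H e V a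

/-- Equality of families of relations `H_i ⊆ Con_i × B`. -/
def FamEq (𝔄 : InfFrame A) (H K : A → Finset A → B → Prop) : Prop :=
  ∀ i : A, ∀ X ∈ 𝔄.Con i, ∀ b : B, H i X b ↔ K i X b

end InfFrame

/-! ### (Simplified) continuous information systems -/

structure InfSys (S : Type*) where
  Con : Set (Finset S)
  ent : Finset S → S → Prop

namespace InfSys

variable {S T U : Type*}

/-- `X ⊢ Y` : every element of `Y` is entailed by `X`. -/
def entS (𝕊 : InfSys S) (X Y : Finset S) : Prop := ∀ b ∈ Y, 𝕊.ent X b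

/-- The axioms of a simplified continuous information system. -/
structure IsSCIS (𝕊 : InfSys S) : Prop where
  singleton_con : ∀ a : S, ({a} : Finset S) ∈ 𝕊.Con
  weaken : ∀ (X Y : Finset S) (a : S),
    X ∈ 𝕊.Con → Y ∈ 𝕊.Con → X ⊆ Y → 𝕊.ent X a → 𝕊.ent Y a
  cut : ∀ (X Y : Finset S) (a : S),
    X ∈ 𝕊.Con → Y ∈ 𝕊.Con → 𝕊.entS X Y → 𝕊.ent Y a → 𝕊.ent X a
  interp : ∀ X ∈ 𝕊.Con, ∀ a : S, 𝕊.ent X a →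
    ∃ Z ∈ 𝕊.Con, 𝕊.entS X Z ∧ 𝕊.ent Z a
  dir : ∀ X ∈ 𝕊.Con, ∀ F : Finset S, 𝕊.entS X F →
    ∃ Z ∈ 𝕊.Con, F ⊆ Z ∧ 𝕊.entS X Z

/-- The axioms of a continuous information system. -/
structure IsCIS (𝕊 : InfSys S) extends IsSCIS 𝕊 : Prop where
  insert_con : ∀ X ∈ 𝕊.Con, ∀ a : S, 𝕊.ent X a → X ∪ {a} ∈ 𝕊.Con

/-- Approximable mappings between (simplified) continuous information systems. -/
structure IsApproxMap (𝕊 : InfSys S) (𝕋 : InfSys T)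
    (H : Finset S → T → Prop) : Prop where
  am1 : ∀ X ∈ 𝕊.Con, ∀ Y ∈ 𝕋.Con, ∀ b : T,
    (∀ c ∈ Y, H X c) → 𝕋.ent Y b → H X b
  am2 : ∀ X ∈ 𝕊.Con, ∀ X' ∈ 𝕊.Con, ∀ b : T, X' ⊆ X → H X' b → H X b
  am3 : ∀ X ∈ 𝕊.Con, ∀ X' ∈ 𝕊.Con, ∀ b : T, 𝕊.entS X X' → H X' b → H X b
  am4 : ∀ X ∈ 𝕊.Con, ∀ b : T, H X b →
    ∃ Z ∈ 𝕊.Con, ∃ Z' ∈ 𝕋.Con, 𝕊.entS X Z ∧ (∀ c ∈ Z', H Z c) ∧ 𝕋.ent Z' b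
  am5 : ∀ X ∈ 𝕊.Con, ∀ F : Finset T, (∀ c ∈ F, H X c) →
    ∃ Z ∈ 𝕋.Con, F ⊆ Z ∧ ∀ c ∈ Z, H X c

/-- Relational composition of approximable mappings (`𝕋` is the middle system). -/
def compMap (𝕋 : InfSys T) (H : Finset S → T → Prop) (G : Finset T → U → Prop) :
    Finset S → U → Prop :=
  fun X u => ∃ Y ∈ 𝕋.Con, (∀ b ∈ Y, H X b) ∧ G Y u

/-- Equality of relations `H ⊆ Con × U`. -/
def MapEq (𝕊 : InfSys S) (H K : Finset S → U → Prop) : Prop :=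
  ∀ X ∈ 𝕊.Con, ∀ u : U, H X u ↔ K X u

end InfSys

/-! ### The constructions F, S, T and W -/

/-- The tokens of the frame `F(𝕊)`: the consistent sets of `𝕊`. -/
abbrev ConTok {S : Type*} (𝕊 : InfSys S) : Type _ := {X : Finset S // X ∈ 𝕊.Con}

/-- The frame `F(𝕊)` associated with a simplified continuous information system. -/
def Fframe {S : Type*} (𝕊 : InfSys S) : InfFrame (ConTok 𝕊) where
  Con X := {𝔛 | 𝔛 = {X} ∨ ∀ Y ∈ 𝔛, 𝕊.entS X.1 Y.1}
  ent X 𝔛 Y := ∃ E ∈ 𝔛 ∪ ({X} : Finset (ConTok 𝕊)), 𝕊.entS E.1 Y.1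

/-- The action of `F` on approximable mappings. -/
def Fmap {S T : Type*} (𝕊 : InfSys S) (𝕋 : InfSys T) (H : Finset S → T → Prop) :
    ConTok 𝕊 → Finset (ConTok 𝕊) → ConTok 𝕋 → Prop :=
  fun X 𝔛 Y => ∃ E ∈ 𝔛 ∪ ({X} : Finset (ConTok 𝕊)), ∀ b ∈ Y.1, H E.1 b

/-- The information system `S(𝔄)` associated with a (strong) continuous information frame. -/
def Ssys {A : Type*} (𝔄 : InfFrame A) : InfSys A where
  Con := {X | ∃ a : A, ∃ Xb ∈ 𝔄.Con a, X = Xb ∪ {a}}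
  ent X c := ∃ a : A, ∃ Xb ∈ 𝔄.Con a, X = Xb ∪ {a} ∧
    (𝔄.ent a Xb c ∨ 𝔄.ent a {a} c)

/-- The action of `S` on approximable families. -/
def Smap {A B : Type*} (𝔄 : InfFrame A) (H : A → Finset A → B → Prop) :
    Finset A → B → Prop :=
  fun X b => ∃ a : A, ∃ Xb ∈ 𝔄.Con a, X = Xb ∪ {a} ∧ (H a Xb b ∨ H a {a} b)

/-- The tokens of the frame `T(𝔄)`: pairs `(a, X)` with `X ∈ Con_a`. -/
abbrev TTok {A : Type*} (𝔄 : InfFrame A) : Type _ := {p : A × Finset A // p.2 ∈ 𝔄.Con p.1}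

/-- The strong frame `T(𝔄)` associated with a continuous information frame. -/
def Tframe {A : Type*} (𝔄 : InfFrame A) : InfFrame (TTok 𝔄) where
  Con aX := {𝔜 | 𝔜 = {aX} ∨ ∀ bY ∈ 𝔜, 𝔄.entS aX.1.1 aX.1.2 ({bY.1.1} ∪ bY.1.2)}
  ent aX 𝔛 eV := ∃ cZ ∈ 𝔛 ∪ ({aX} : Finset (TTok 𝔄)),
    𝔄.entS cZ.1.1 cZ.1.2 ({eV.1.1} ∪ eV.1.2)

/-- The action of `T` on approximable families. -/
def Tmap {A B : Type*} (𝔄 : InfFrame A) (𝔅 : InfFrame B)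
    (H : A → Finset A → B → Prop) :
    TTok 𝔄 → Finset (TTok 𝔄) → TTok 𝔅 → Prop :=
  fun aX 𝔛 bY => ∃ cZ ∈ 𝔛 ∪ ({aX} : Finset (TTok 𝔄)),
    ∀ d ∈ ({bY.1.1} : Finset B) ∪ bY.1.2, H cZ.1.1 cZ.1.2 d

/-- Removing the adjoined truth token: `X \ {t}` as a finite subset of `A`. -/
noncomputable def unsome {A : Type*} (X : Finset (Option A)) : Finset A :=
  X.preimage some (Option.some_injective A).injOn

/-- The frame `W(𝔄)`: `𝔄` extended by a (fresh) truth element `none`. -/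
def Wframe {A : Type*} (𝔄 : InfFrame A) : InfFrame (Option A) where
  Con a :=
    match a with
    | some a => {X | ∃ Y ∈ 𝔄.Con a, X = Y.image some ∨ X = Y.image some ∪ {none}}
    | none => {X | X = {none} ∨ X = ∅}
  ent a X c :=
    match a, c with
    | _, none => True
    | none, some _ => False
    | some a', some c' => 𝔄.ent a' (unsome X) c'

/-- The approximable mapping `S_𝕊 : 𝕊 ⟶ S(F(𝕊))`: `X S_𝕊 Y ⇔ X ⊢ Y`. -/
def SSmap {S : Type*} (𝕊 : InfSys S) : Finset S → ConTok 𝕊 → Prop :=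
  fun X Y => 𝕊.entS X Y.1

/-! Both sides of the naturality square reduce to `X H V`: on the left by interpolating
`X H V` in the codomain (`am4`, `am5`), on the right by interpolating it in the domain
(`am4`, directedness), since a set `𝔜` is related to `V` by `S(F(H))` exactly when one of
its members `E` satisfies `E H V`. -/

namespace InfSys.IsApproxMap

variable {S T : Type*} {𝕊 : InfSys S} {𝕋 : InfSys T} {H : Finset S → T → Prop}

theorem exists_entS_apply (hH : IsApproxMap 𝕊 𝕋 H) {X : Finset S} (hX : X ∈ 𝕊.Con) {b : T}
    (hXb : H X b) : ∃ Z ∈ 𝕊.Con, 𝕊.entS X Z ∧ H Z b := by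
  obtain ⟨Z, hZ, Z', hZ', hXZ, hZZ', hZ'b⟩ := hH.am4 X hX b hXb
  exact ⟨Z, hZ, hXZ, hH.am1 Z hZ Z' hZ' b hZZ' hZ'b⟩

theorem exists_apply_ent (hH : IsApproxMap 𝕊 𝕋 H) {X : Finset S} (hX : X ∈ 𝕊.Con) {b : T}
    (hXb : H X b) : ∃ Y ∈ 𝕋.Con, (∀ c ∈ Y, H X c) ∧ 𝕋.ent Y b := by
  obtain ⟨Z, hZ, Z', hZ', hXZ, hZZ', hZ'b⟩ := hH.am4 X hX b hXb
  exact ⟨Z', hZ', fun c hc => hH.am3 X hX Z hZ c hXZ (hZZ' c hc), hZ'b⟩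

theorem forall_iff_exists_entS_dom (hS : 𝕊.IsSCIS) (hH : IsApproxMap 𝕊 𝕋 H)
    {X : Finset S} (hX : X ∈ 𝕊.Con) (F : Finset T) :
    (∀ b ∈ F, H X b) ↔ ∃ Z ∈ 𝕊.Con, 𝕊.entS X Z ∧ ∀ b ∈ F, H Z b := by
  refine ⟨fun hF => ?_, fun ⟨Z, hZ, hXZ, hZF⟩ b hb => hH.am3 X hX Z hZ b hXZ (hZF b hb)⟩
  choose! Zb hZb hXZb hHZb using fun b hb => hH.exists_entS_apply hX (hF b hb)
  have hXU : 𝕊.entS X (F.biUnion Zb) := fun s hs => by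
    obtain ⟨b, hb, hs⟩ := Finset.mem_biUnion.1 hs
    exact hXZb b hb s hs
  obtain ⟨Z, hZ, hUZ, hXZ⟩ := hS.dir X hX _ hXU
  exact ⟨Z, hZ, hXZ, fun b hb => hH.am2 Z hZ (Zb b) (hZb b hb) b
    ((F.subset_biUnion_of_mem Zb hb).trans hUZ) (hHZb b hb)⟩

theorem forall_iff_exists_entS_cod (hT : 𝕋.IsSCIS) (hH : IsApproxMap 𝕊 𝕋 H)
    {X : Finset S} (hX : X ∈ 𝕊.Con) (F : Finset T) :
    (∀ b ∈ F, H X b) ↔ ∃ Y ∈ 𝕋.Con, (∀ c ∈ Y, H X c) ∧ 𝕋.entS Y F := by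
  refine ⟨fun hF => ?_, fun ⟨Y, hY, hXY, hYF⟩ b hb => hH.am1 X hX Y hY b hXY (hYF b hb)⟩
  choose! Yb hYb hXYb hYbb using fun b hb => hH.exists_apply_ent hX (hF b hb)
  have hXU : ∀ c ∈ F.biUnion Yb, H X c := fun c hc => by
    obtain ⟨b, hb, hc⟩ := Finset.mem_biUnion.1 hc
    exact hXYb b hb c hc
  obtain ⟨Y, hY, hUY, hXY⟩ := hH.am5 X hX _ hXU
  exact ⟨Y, hY, hXY, fun b hb => hT.weaken (Yb b) Y b (hYb b hb) hY
    ((F.subset_biUnion_of_mem Yb hb).trans hUY) (hYbb b hb)⟩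

end InfSys.IsApproxMap

section

variable {S T : Type*} {𝕊 : InfSys S} {𝕋 : InfSys T} {H : Finset S → T → Prop}

theorem singleton_mem_Ssys_Fframe_con (Z : ConTok 𝕊) : {Z} ∈ (Ssys (Fframe 𝕊)).Con :=
  ⟨Z, {Z}, Or.inl rfl, by simp⟩

theorem Smap_Fmap_iff {𝔜 : Finset (ConTok 𝕊)} (h𝔜 : 𝔜 ∈ (Ssys (Fframe 𝕊)).Con)
    (V : ConTok 𝕋) :
    Smap (Fframe 𝕊) (Fmap 𝕊 𝕋 H) 𝔜 V ↔ ∃ E ∈ 𝔜, ∀ b ∈ V.1, H E.1 b := by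
  constructor
  · rintro ⟨a, 𝔛, -, rfl, ⟨E, hE, hEV⟩ | ⟨E, hE, hEV⟩⟩ <;> exact ⟨E, by simp_all, hEV⟩
  · rintro ⟨E, hE, hEV⟩
    obtain ⟨a, 𝔛, h𝔛, rfl⟩ := h𝔜
    exact ⟨a, 𝔛, h𝔛, rfl, Or.inl ⟨E, by simpa using hE, hEV⟩⟩

theorem compMap_SSmap_Smap_Fmap_iff (X : Finset S) (V : ConTok 𝕋) :
    InfSys.compMap (Ssys (Fframe 𝕊)) (SSmap 𝕊) (Smap (Fframe 𝕊) (Fmap 𝕊 𝕋 H)) X V ↔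
      ∃ Z ∈ 𝕊.Con, 𝕊.entS X Z ∧ ∀ b ∈ V.1, H Z b := by
  constructor
  · rintro ⟨𝔜, h𝔜, hX𝔜, h𝔜V⟩
    obtain ⟨E, hE, hEV⟩ := (Smap_Fmap_iff h𝔜 V).1 h𝔜V
    exact ⟨E.1, E.2, hX𝔜 E hE, hEV⟩
  · rintro ⟨Z, hZ, hXZ, hZV⟩
    have h𝔜 := singleton_mem_Ssys_Fframe_con ⟨Z, hZ⟩
    exact ⟨{⟨Z, hZ⟩}, h𝔜, by simpa [SSmap] using hXZ,
      (Smap_Fmap_iff h𝔜 V).2 ⟨_, Finset.mem_singleton_self _, hZV⟩⟩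

end

/-- Lemma 15 (`lem-trtau`): naturality of `S_𝕊`: `H ∘ S_𝕋 = S_𝕊 ∘ S(F(H))`. -/
theorem SSmap_natural {S T : Type*} (𝕊 : InfSys S) (𝕋 : InfSys T)
    (hS : 𝕊.IsCIS) (hT : 𝕋.IsCIS) (H : Finset S → T → Prop)
    (hH : InfSys.IsApproxMap 𝕊 𝕋 H) :
    InfSys.MapEq 𝕊
      (InfSys.compMap 𝕋 H (SSmap 𝕋))
      (InfSys.compMap (Ssys (Fframe 𝕊)) (SSmap 𝕊)
        (Smap (Fframe 𝕊) (Fmap 𝕊 𝕋 H))) := by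
  intro X hX V
  rw [compMap_SSmap_Smap_Fmap_iff, ← hH.forall_iff_exists_entS_dom hS.toIsSCIS hX]
  exact (hH.forall_iff_exists_entS_cod hT.toIsSCIS hX V.1).symm
end

section
/- Let A = (A, (Con_i)_{i∈A}, (⊨_i)_{i∈A}) be a continuous information frame. Define T(A) = (Ã, (C̃on_x)_{x∈Ã}, (⊨̃_x)_{x∈Ã}) by: Ã = { (a, X) : a ∈ A, X ∈ Con_a }; C̃on_{(a,X)} = {{(a,X)}} ∪ { 𝔜 finite ⊆ Ã : for all (b,Y) ∈ 𝔜, X ⊨_a ({b} ∪ Y) }; and 𝔛 ⊨̃_{(a,X)} (e,V) iff there is (c,Z) ∈ 𝔛 ∪ {(a,X)} with Z ⊨_c ({e} ∪ V). Then T(A) is a strong continuous information frame. -/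
open scoped Classical

/-- Composition lemma: if `X ⊨_a {c} ∪ Z` and `Z ⊨_c d` then `X ⊨_a d`. -/
lemma cif_comp {A : Type*} {𝔄 : InfFrame A} (h : 𝔄.IsCIF) {a c : A} {X Z : Finset A}
    (hX : X ∈ 𝔄.Con a) (hZ : Z ∈ 𝔄.Con c) (h1 : 𝔄.entS a X ({c} ∪ Z))
    {d : A} (h2 : 𝔄.ent c Z d) : 𝔄.ent a X d := by
  have hcZ : ({c} ∪ Z : Finset A) ∈ 𝔄.Con a := h.sound a X _ hX h1
  have hc : ({c} : Finset A) ∈ 𝔄.Con a :=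
    h.con_sub a _ _ Finset.subset_union_left hcZ
  have hZa : 𝔄.ent a Z d := h.ent_transfer c a Z d hc hZ h2
  exact h.cut a X Z d hX (fun b hb => h1 b (Finset.mem_union_right _ hb)) hZa

lemma cif_compS {A : Type*} {𝔄 : InfFrame A} (h : 𝔄.IsCIF) {a c : A} {X Z W : Finset A}
    (hX : X ∈ 𝔄.Con a) (hZ : Z ∈ 𝔄.Con c) (h1 : 𝔄.entS a X ({c} ∪ Z))
    (h2 : 𝔄.entS c Z W) : 𝔄.entS a X W :=
  fun b hb => cif_comp h hX hZ h1 (h2 b hb)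

/-- Reduction: entailment in `T(𝔄)` from a consistent set reduces to entailment
from the index token itself. -/
lemma tframe_red {A : Type*} {𝔄 : InfFrame A} (h : 𝔄.IsCIF) {p q : TTok 𝔄}
    {𝔛 : Finset (TTok 𝔄)} (h𝔛 : 𝔛 ∈ (Tframe 𝔄).Con p)
    (hent : (Tframe 𝔄).ent p 𝔛 q) : 𝔄.entS p.1.1 p.1.2 ({q.1.1} ∪ q.1.2) := by
  obtain ⟨cZ, hcZ, hE⟩ := hent
  rcases Finset.mem_union.1 hcZ with hcZ | hcZ
  · rcases h𝔛 with h𝔛 | h𝔛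
    · rw [h𝔛, Finset.mem_singleton] at hcZ
      rwa [hcZ] at hE
    · exact cif_compS h p.2 cZ.2 (h𝔛 cZ hcZ) hE
  · rw [Finset.mem_singleton] at hcZ
    rwa [hcZ] at hE

/-- Theorem 5 (`thm-cs`): for a continuous information frame `𝔄`, the frame
`T(𝔄)` is a strong continuous information frame. -/
theorem Tframe_isStrongCIF {A : Type*} (𝔄 : InfFrame A) (h : 𝔄.IsCIF) :
    (Tframe 𝔄).IsCIF ∧ (Tframe 𝔄).Strong := by
  constructor
  · constructor
    · -- self_con
      intro p; exact Or.inl rfl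
    · -- con_sub
      intro p 𝔛 𝔜 hsub h𝔛
      rcases h𝔛 with h𝔛 | h𝔛
      · subst h𝔛
        rcases Finset.subset_singleton_iff.1 hsub with rfl | rfl
        · exact Or.inr (fun q hq => absurd hq (Finset.notMem_empty q))
        · exact Or.inl rfl
      · exact Or.inr (fun q hq => h𝔛 q (hsub hq))
    · -- sound
      intro p 𝔛 𝔜 h𝔛 hent
      exact Or.inr (fun q hq => tframe_red h h𝔛 (hent q hq))
    · -- weaken
      intro p 𝔛 𝔜 q _ _ hsub hent
      obtain ⟨cZ, hcZ, hE⟩ := hent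
      refine ⟨cZ, ?_, hE⟩
      rcases Finset.mem_union.1 hcZ with hm | hm
      · exact Finset.mem_union_left _ (hsub hm)
      · exact Finset.mem_union_right _ hm
    · -- cut
      intro p 𝔛 𝔜 q h𝔛 hXY hent
      obtain ⟨cZ, hcZ, hE⟩ := hent
      rcases Finset.mem_union.1 hcZ with hm | hm
      · have hred : 𝔄.entS p.1.1 p.1.2 ({cZ.1.1} ∪ cZ.1.2) :=
          tframe_red h h𝔛 (hXY cZ hm)
        exact ⟨p, Finset.mem_union_right _ (Finset.mem_singleton_self p),
          cif_compS h p.2 cZ.2 hred hE⟩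
      · rw [Finset.mem_singleton] at hm
        subst hm
        exact ⟨cZ, Finset.mem_union_right _ (Finset.mem_singleton_self cZ), hE⟩
    · -- con_transfer
      intro p q hpq 𝔛 h𝔛
      rcases hpq with hpq | hpq
      · have : p = q := by
          have := Finset.singleton_injective hpq
          exact this
        rwa [← this]
      · have hpq' : 𝔄.entS q.1.1 q.1.2 ({p.1.1} ∪ p.1.2) :=
          hpq p (Finset.mem_singleton_self p)
        rcases h𝔛 with h𝔛 | h𝔛
        · subst h𝔛; exact Or.inr hpq
        · exact Or.inr (fun r hr => cif_compS h q.2 p.2 hpq' (h𝔛 r hr))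
    · -- ent_transfer
      intro p q 𝔛 r hpq h𝔛 hent
      obtain ⟨cZ, hcZ, hE⟩ := hent
      rcases Finset.mem_union.1 hcZ with hm | hm
      · exact ⟨cZ, Finset.mem_union_left _ hm, hE⟩
      · rw [Finset.mem_singleton] at hm
        subst hm
        rcases hpq with hpq | hpq
        · have : cZ = q := Finset.singleton_injective hpq
          subst this
          exact ⟨cZ, Finset.mem_union_right _ (Finset.mem_singleton_self cZ), hE⟩
        · have hpq' : 𝔄.entS q.1.1 q.1.2 ({cZ.1.1} ∪ cZ.1.2) :=
            hpq cZ (Finset.mem_singleton_self cZ)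
          exact ⟨q, Finset.mem_union_right _ (Finset.mem_singleton_self q),
            cif_compS h q.2 cZ.2 hpq' hE⟩
    · -- interp
      intro p 𝔛 𝔜 h𝔛 hent
      -- reduce to entailment from p itself
      have hred : ∀ q ∈ 𝔜, 𝔄.entS p.1.1 p.1.2 ({q.1.1} ∪ q.1.2) :=
        fun q hq => tframe_red h h𝔛 (hent q hq)
      -- collect all targets
      set Y₀ : Finset A := 𝔜.biUnion (fun q => {q.1.1} ∪ q.1.2) with hY₀
      have hXY₀ : 𝔄.entS p.1.1 p.1.2 Y₀ := by
        intro b hb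
        obtain ⟨q, hq, hb⟩ := Finset.mem_biUnion.1 hb
        exact hred q hq b hb
      obtain ⟨e, Z, hZ, h1, h2⟩ := h.interp p.1.1 p.1.2 Y₀ p.2 hXY₀
      refine ⟨⟨(e, Z), hZ⟩, ∅, Or.inr (fun q hq => absurd hq (Finset.notMem_empty q)),
        ?_, ?_⟩
      · intro q hq
        simp only [Finset.union_empty, Finset.mem_singleton] at hq
        subst hq
        exact ⟨p, Finset.mem_union_right _ (Finset.mem_singleton_self p), h1⟩
      · intro q hq
        refine ⟨⟨(e, Z), hZ⟩, Finset.mem_union_right _ (Finset.mem_singleton_self _), ?_⟩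
        intro b hb
        exact h2 b (Finset.mem_biUnion.2 ⟨q, hq, hb⟩)
  · -- Strong
    intro p 𝔛 h𝔛 hne
    rcases h𝔛 with h𝔛 | h𝔛
    · exact absurd h𝔛 hne
    · intro q hq
      exact ⟨p, Finset.mem_union_right _ (Finset.mem_singleton_self p),
        h𝔛 q hq⟩
end

section
/- Let A and A' be continuous information frames and H an approximable family from A to A'. For (a,X) ∈ Ã, 𝔛 ∈ C̃on_{(a,X)} and (b,Y) ∈ Ã' define 𝔛 H̃_{(a,X)} (b,Y) iff there is (c,Z) ∈ 𝔛 ∪ {(a,X)} with Z H_c ({b} ∪ Y). Then T(H) = (H̃_{(a,X)})_{(a,X)∈Ã} is an approximable family from T(A) to T(A'). -/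
open scoped Classical

/-- Key transfer lemma: if `W ⊨_d ({c} ∪ Z)` and `Z H_c b`, then `W H_d b`. -/
lemma key_transfer {A B : Type*} {𝔄 : InfFrame A} {𝔅 : InfFrame B}
    (hA : 𝔄.IsCIF) {H : A → Finset A → B → Prop}
    (hH : InfFrame.IsApproxFam 𝔄 𝔅 H) (d c : A) (W Z : Finset A) (b : B)
    (hW : W ∈ 𝔄.Con d) (hZ : Z ∈ 𝔄.Con c)
    (hent : 𝔄.entS d W ({c} ∪ Z)) (hZb : H c Z b) : H d W b := by
  classical
  have hS : ({c} ∪ Z : Finset A) ∈ 𝔄.Con d := hA.sound d W _ hW hent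
  have hc : ({c} : Finset A) ∈ 𝔄.Con d :=
    hA.con_sub d ({c} ∪ Z) {c} Finset.subset_union_left hS
  have hZd : Z ∈ 𝔄.Con d := hA.con_transfer c d hc hZ
  have h1 : H d Z b := hH.af4 c d Z b hc hZ hZb
  have h2 : H d ({c} ∪ Z) b :=
    hH.af2 d Z ({c} ∪ Z) b hZd hS Finset.subset_union_right h1
  exact hH.af3 d W ({c} ∪ Z) b hW hS hent h2

/-- Lemma 16 (`lem-csf`): `T(H)` is an approximable family from `T(𝔄)` to `T(𝔅)`. -/
theorem Tmap_isApproxFam {A B : Type*} (𝔄 : InfFrame A) (𝔅 : InfFrame B)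
    (hA : 𝔄.IsCIF) (hB : 𝔅.IsCIF)
    (H : A → Finset A → B → Prop) (hH : InfFrame.IsApproxFam 𝔄 𝔅 H) :
    InfFrame.IsApproxFam (Tframe 𝔄) (Tframe 𝔅) (Tmap 𝔄 𝔅 H) := by
  classical
  constructor
  · -- af1
    intro aX 𝔛 k Yset b h𝔛 hY hall hent
    obtain ⟨cZ, hmem, hcZ⟩ := hent
    obtain ⟨dW, hdW, hHdW⟩ := hall cZ (by simp only [Finset.mem_union, Finset.mem_singleton] at hmem ⊢; tauto)
    refine ⟨dW, hdW, fun d hd => ?_⟩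
    exact hH.af1 dW.1.1 dW.1.2 cZ.1.1 cZ.1.2 d dW.2 cZ.2 hHdW (hcZ d hd)
  · -- af2
    intro aX 𝔛 𝔛' b h𝔛 h𝔛' hsub h
    obtain ⟨cZ, hmem, hcZ⟩ := h
    exact ⟨cZ, Finset.union_subset_union hsub (Finset.Subset.refl _) hmem, hcZ⟩
  · -- af3
    intro aX 𝔛 𝔛' b h𝔛 h𝔛' hent h
    obtain ⟨cZ, hmem, hcZ⟩ := h
    rcases Finset.mem_union.1 hmem with hmem | hmem
    · obtain ⟨dW, hdW, hentdW⟩ := hent cZ hmem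
      refine ⟨dW, hdW, fun d hd => ?_⟩
      exact key_transfer hA hH dW.1.1 cZ.1.1 dW.1.2 cZ.1.2 d dW.2 cZ.2
        hentdW (hcZ d hd)
    · rw [Finset.mem_singleton] at hmem
      subst hmem
      exact ⟨cZ, by simp, hcZ⟩
  · -- af4
    intro aX bY 𝔛 b hij h𝔛 h
    obtain ⟨cZ, hmem, hcZ⟩ := h
    rcases Finset.mem_union.1 hmem with hmem | hmem
    · exact ⟨cZ, Finset.mem_union_left _ hmem, hcZ⟩
    · rw [Finset.mem_singleton] at hmem
      subst hmem
      rcases hij with hij | hij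
      · have : cZ = bY := by
          have := Finset.singleton_injective hij
          exact this
        subst this
        exact ⟨cZ, by simp, hcZ⟩
      · have hentb := hij cZ (Finset.mem_singleton_self _)
        refine ⟨bY, by simp, fun d hd => ?_⟩
        exact key_transfer hA hH bY.1.1 cZ.1.1 bY.1.2 cZ.1.2 d bY.2 cZ.2
          hentb (hcZ d hd)
  · -- af5
    intro aX 𝔛 F h𝔛 hall
    -- Step 1: `X H_a d` for every `d` in the flattening of `F`.
    have hXa : ∀ bY ∈ F, ∀ d ∈ ({bY.1.1} : Finset B) ∪ bY.1.2,
        H aX.1.1 aX.1.2 d := by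
      intro bY hbY d hd
      obtain ⟨cZ, hmem, hcZ⟩ := hall bY hbY
      rcases Finset.mem_union.1 hmem with hmem | hmem
      · rcases h𝔛 with h𝔛 | h𝔛
        · rw [h𝔛, Finset.mem_singleton] at hmem
          subst hmem
          exact hcZ d hd
        · exact key_transfer hA hH aX.1.1 cZ.1.1 aX.1.2 cZ.1.2 d aX.2 cZ.2
            (h𝔛 cZ hmem) (hcZ d hd)
      · rw [Finset.mem_singleton] at hmem
        subst hmem
        exact hcZ d hd
    set F' : Finset B := F.biUnion (fun bY => ({bY.1.1} : Finset B) ∪ bY.1.2)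
      with hF'
    have hF'H : ∀ d ∈ F', H aX.1.1 aX.1.2 d := by
      intro d hd
      obtain ⟨bY, hbY, hd⟩ := Finset.mem_biUnion.1 hd
      exact hXa bY hbY d hd
    obtain ⟨c, U, hU, e, V, hV, h1, h2, h3⟩ :=
      hH.af5 aX.1.1 aX.1.2 F' aX.2 hF'H
    refine ⟨⟨(c, U), hU⟩, ∅, Or.inr (by simp), ⟨(e, V), hV⟩, ∅,
      Or.inr (by simp), ?_, ?_, ?_⟩
    · intro t ht
      simp only [Finset.union_empty, Finset.mem_singleton] at ht
      subst ht
      exact ⟨aX, by simp, h1⟩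
    · intro d hd
      simp only [Finset.union_empty, Finset.mem_singleton] at hd
      subst hd
      exact ⟨⟨(c, U), hU⟩, by simp, fun d' hd' => h2 d' hd'⟩
    · intro bY hbY
      refine ⟨⟨(e, V), hV⟩, by simp, fun x hx => ?_⟩
      exact h3 x (Finset.mem_biUnion.2 ⟨bY, hbY, hx⟩)
end

section
/- Let A be a continuous information frame with truth element t. Then (t, ∅) is a truth element of T(A), i.e., for every (a,X) ∈ Ã, ∅ ⊨̃_{(a,X)} (t, ∅). Moreover, if A' is a further continuous information frame with truth element t' and H is an approximable family from A to A' that respects the truth elements t and t', then T(H) respects the truth elements (t, ∅) and (t', ∅), i.e., ∅ H̃_{(t,∅)} (t', ∅). -/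
open scoped Classical

/-- Propositions 4 and 5 (`pn-tpres1`, `pn-tpres2`): `(t, ∅)` is a truth element
of `T(𝔄)`, and `T(H)` respects the truth elements `(t, ∅)` and `(t', ∅)`. -/
theorem Tframe_truth {A B : Type*} (𝔄 : InfFrame A) (hA : 𝔄.IsCIF)
    (t : A) (ht : 𝔄.IsTruth t) :
    (∃ hmem : (∅ : Finset A) ∈ 𝔄.Con t,
      (Tframe 𝔄).IsTruth ⟨(t, ∅), hmem⟩) ∧
    ∀ (𝔅 : InfFrame B), 𝔅.IsCIF → ∀ t' : B, 𝔅.IsTruth t' →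
      ∀ H : A → Finset A → B → Prop, InfFrame.IsApproxFam 𝔄 𝔅 H →
        InfFrame.RespectsTruth H t t' →
        ∃ (hmem : (∅ : Finset A) ∈ 𝔄.Con t) (hmem' : (∅ : Finset B) ∈ 𝔅.Con t'),
          InfFrame.RespectsTruth (Tmap 𝔄 𝔅 H) ⟨(t, ∅), hmem⟩ ⟨(t', ∅), hmem'⟩ := by
  have hmem : (∅ : Finset A) ∈ 𝔄.Con t :=
    hA.con_sub t {t} ∅ (Finset.empty_subset _) (hA.self_con t)
  constructor
  · refine ⟨hmem, ?_⟩
    intro aX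
    refine ⟨aX, by simp, ?_⟩
    intro b hb
    simp only [Finset.union_empty, Finset.mem_singleton] at hb
    rw [hb]
    exact hA.weaken aX.1.1 ∅ aX.1.2 t
      (hA.con_sub aX.1.1 aX.1.2 ∅ (Finset.empty_subset _) aX.2) aX.2
      (Finset.empty_subset _) (ht aX.1.1)
  · intro 𝔅 hB t' ht' H hH hR
    have hmem' : (∅ : Finset B) ∈ 𝔅.Con t' :=
      hB.con_sub t' {t'} ∅ (Finset.empty_subset _) (hB.self_con t')
    refine ⟨hmem, hmem', ⟨⟨(t, ∅), hmem⟩, by simp, ?_⟩⟩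
    intro d hd
    simp only [Finset.union_empty, Finset.mem_singleton] at hd
    rw [hd]
    exact hR
end

section
/- Let A = (A, (Con_i)_{i∈A}, (⊨_i)_{i∈A}) be a continuous information frame and t ∉ A. Define W(A) = (Ā, (C̄on_i)_{i∈Ā}, (⊨̄_i)_{i∈Ā}) by: Ā = A ∪ {t}; C̄on_a = Con_a ∪ { X ∪ {t} : X ∈ Con_a } for a ∈ A, and C̄on_t = {{t}, ∅}; and for a ∈ Ā, X ∈ C̄on_a and c ∈ Ā: X ⊨̄_a c iff (a ≠ t and c ≠ t and X \ {t} ⊨_a c) or c = t. Then W(A) is a continuous information frame with truth element t. -/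
open scoped Classical

section WAux

variable {A : Type*}

lemma mem_unsome (X : Finset (Option A)) (a : A) : a ∈ unsome X ↔ some a ∈ X := by
  simp [unsome]

lemma unsome_image (Y : Finset A) : unsome (Y.image some) = Y := by
  ext a; simp [mem_unsome]

lemma unsome_union (X Y : Finset (Option A)) :
    unsome (X ∪ Y) = unsome X ∪ unsome Y := by
  ext a; simp [mem_unsome]

lemma unsome_none : unsome ({none} : Finset (Option A)) = ∅ := by
  ext a; simp [mem_unsome]

lemma unsome_empty : unsome (∅ : Finset (Option A)) = ∅ := by
  ext a; simp [mem_unsome]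

lemma unsome_singleton (a : A) : unsome ({some a} : Finset (Option A)) = {a} := by
  ext b; simp [mem_unsome]

lemma unsome_mono {X Y : Finset (Option A)} (hXY : X ⊆ Y) : unsome X ⊆ unsome Y := by
  intro a ha; rw [mem_unsome] at *; exact hXY ha

lemma image_unsome (X : Finset (Option A)) :
    X = (unsome X).image some ∨ X = (unsome X).image some ∪ {none} := by
  by_cases hn : none ∈ X
  · right; ext o
    rcases o with _ | a <;> simp [mem_unsome, hn]
  · left; ext o
    rcases o with _ | a <;> simp [mem_unsome, hn]

lemma mem_WCon_some (𝔄 : InfFrame A) (a : A) (X : Finset (Option A)) :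
    X ∈ (Wframe 𝔄).Con (some a) ↔ unsome X ∈ 𝔄.Con a := by
  constructor
  · rintro ⟨Y, hY, rfl | rfl⟩
    · rwa [unsome_image]
    · rwa [unsome_union, unsome_image, unsome_none, Finset.union_empty]
  · intro hX
    exact ⟨unsome X, hX, image_unsome X⟩

lemma mem_WCon_none (𝔄 : InfFrame A) (X : Finset (Option A)) :
    X ∈ (Wframe 𝔄).Con none ↔ X ⊆ {none} := by
  show (X = {none} ∨ X = ∅) ↔ _
  rw [Finset.subset_singleton_iff]
  tauto

lemma Went_some_some (𝔄 : InfFrame A) (a c : A) (X : Finset (Option A)) :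
    (Wframe 𝔄).ent (some a) X (some c) ↔ 𝔄.ent a (unsome X) c := Iff.rfl

lemma WentS_some (𝔄 : InfFrame A) (a : A) (X Y : Finset (Option A)) :
    (Wframe 𝔄).entS (some a) X Y ↔ 𝔄.entS a (unsome X) (unsome Y) := by
  constructor
  · intro hS b hb
    exact hS (some b) ((mem_unsome Y b).1 hb)
  · rintro hS (_ | b) hb
    · trivial
    · exact hS b ((mem_unsome Y b).2 hb)

lemma empty_con (𝔄 : InfFrame A) (h : 𝔄.IsCIF) (a : A) : (∅ : Finset A) ∈ 𝔄.Con a :=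
  h.con_sub a {a} ∅ (Finset.empty_subset _) (h.self_con a)

end WAux

/-- Theorem 6 (`thm-exstr`): `W(𝔄)`, the extension of a continuous information
frame `𝔄` by a fresh token, is a continuous information frame with the fresh
token (here `none`) as truth element. -/
theorem Wframe_isCIF_truth {A : Type*} (𝔄 : InfFrame A) (h : 𝔄.IsCIF) :
    (Wframe 𝔄).IsCIF ∧ (Wframe 𝔄).IsTruth none := by
  constructor
  · constructor
    · -- self_con
      rintro (_ | a)
      · left; rfl
      · rw [mem_WCon_some, unsome_singleton]; exact h.self_con a
    · -- con_sub
      rintro (_ | a) X Y hYX hX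
      · rw [mem_WCon_none] at *
        exact hYX.trans hX
      · rw [mem_WCon_some] at *
        exact h.con_sub a (unsome X) (unsome Y) (unsome_mono hYX) hX
    · -- sound
      rintro (_ | a) X Y hX hS
      · rw [mem_WCon_none]
        intro o ho
        rcases o with _ | b
        · exact Finset.mem_singleton_self _
        · exact absurd (hS (some b) ho) id
      · rw [mem_WCon_some] at *
        rw [WentS_some] at hS
        exact h.sound a (unsome X) (unsome Y) hX hS
    · -- weaken
      rintro (_ | a) X Y (_ | c) hX hY hXY he
      · trivial
      · exact he
      · trivial
      · rw [mem_WCon_some] at hX hY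
        rw [Went_some_some] at *
        exact h.weaken a (unsome X) (unsome Y) c hX hY (unsome_mono hXY) he
    · -- cut
      rintro (_ | a) X Y (_ | c) hX hS he
      · trivial
      · exact absurd he id
      · trivial
      · rw [mem_WCon_some] at hX
        rw [WentS_some] at hS
        rw [Went_some_some] at *
        exact h.cut a (unsome X) (unsome Y) c hX hS he
    · -- con_transfer
      rintro (_ | a) (_ | b) hij X hX
      · exact hX
      · rw [mem_WCon_none] at hX
        rw [mem_WCon_some]
        have : unsome X = ∅ := by
          rcases Finset.subset_singleton_iff.1 hX with rfl | rfl
          · exact unsome_empty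
          · exact unsome_none
        rw [this]
        exact empty_con 𝔄 h b
      · rw [mem_WCon_none] at hij
        simp at hij
      · rw [mem_WCon_some, unsome_singleton] at hij
        rw [mem_WCon_some] at *
        exact h.con_transfer a b hij hX
    · -- ent_transfer
      rintro (_ | a) (_ | b) X (_ | c) hij hX he
      · trivial
      · exact absurd he id
      · trivial
      · exact absurd he id
      · trivial
      · rw [mem_WCon_none] at hij; simp at hij
      · trivial
      · rw [mem_WCon_some, unsome_singleton] at hij
        rw [mem_WCon_some] at hX
        rw [Went_some_some] at *
        exact h.ent_transfer a b (unsome X) c hij hX he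
    · -- interp
      rintro (_ | a) X Y hX hS
      · refine ⟨none, ∅, Or.inr rfl, ?_, ?_⟩
        · rintro (_ | b) hb
          · trivial
          · simp at hb
        · rintro (_ | b) hb
          · trivial
          · exact absurd (hS (some b) hb) id
      · rw [mem_WCon_some] at hX
        rw [WentS_some] at hS
        obtain ⟨e, Z, hZ, h1, h2⟩ := h.interp a (unsome X) (unsome Y) hX hS
        refine ⟨some e, Z.image some, ?_, ?_, ?_⟩
        · rw [mem_WCon_some, unsome_image]; exact hZ
        · rw [WentS_some]
          intro b hb
          apply h1
          rw [mem_unsome] at hb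
          simp only [Finset.mem_union, Finset.mem_singleton, Finset.mem_image,
            Option.some.injEq] at hb ⊢
          rcases hb with hb | ⟨c, hc, rfl⟩
          · exact Or.inl hb
          · exact Or.inr hc
        · rw [WentS_some, unsome_image]
          exact h2
  · -- IsTruth
    intro i; rcases i with _ | a <;> trivial
end
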